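/- There exist two disjoint subsets S₁ and S₂ of C₁₀, each of size 192, such that within each Sᵢ any two distinct elements have Hamming distance at least 6. In particular, the maximum size 192 of a subcode of C₁₀ with minimum distance 6 is attained. -/

import Mathlib

/-!
Encode a 4×4 binary matrix as a 16-bit integer, so that matrix addition becomes `xor`. The first
code is a union of six cosets `t + RM(1,4)` of the first-order Reed–Muller code, all inside `C₁₀`.
Every difference of two of its words is `t + u + v` with `t, u` coset leaders and `v ∈ RM(1,4)`,
so its minimum distance is a check over `6 · 6 · 32` words instead of all pairs. The second code
is its translate by the 2×2 corner block, a word of `C₁₀` of weight 4: translation preserves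
distances, and since the nonzero differences within the first code have weight at least 6, none
of them is the block, so the two codes are disjoint.
-/

/-- `C₁₀`: the set of `4×4` matrices over `𝔽₂` all of whose four row sums and
four column sums are equal to one common value in `𝔽₂`. -/
def C10 : Set (Fin 4 × Fin 4 → ZMod 2) :=
  {m | ∃ s : ZMod 2, (∀ i : Fin 4, ∑ j : Fin 4, m (i, j) = s) ∧
        (∀ j : Fin 4, ∑ i : Fin 4, m (i, j) = s)}

section Hamming

variable {ι : Type*} [Fintype ι] {β : ι → Type*} [∀ i, DecidableEq (β i)]

def HasMinDist (S : Finset (∀ i, β i)) (d : ℕ) : Prop :=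
  ∀ x ∈ S, ∀ y ∈ S, x ≠ y → d ≤ hammingDist x y

theorem hammingDist_add_left [∀ i, AddGroup (β i)] (c x y : ∀ i, β i) :
    hammingDist (c + x) (c + y) = hammingDist x y :=
  hammingDist_comp (fun i => (c i + ·)) fun i => add_right_injective (c i)

theorem HasMinDist.map_addLeftEmbedding [∀ i, AddGroup (β i)] {S : Finset (∀ i, β i)}
    {d : ℕ} (hS : HasMinDist S d) (c : ∀ i, β i) :
    HasMinDist (S.map (addLeftEmbedding c)) d := by
  intro _ hx' _ hy' hne
  obtain ⟨x, hx, rfl⟩ := Finset.mem_map.mp hx'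
  obtain ⟨y, hy, rfl⟩ := Finset.mem_map.mp hy'
  rw [addLeftEmbedding_apply, addLeftEmbedding_apply, hammingDist_add_left]
  exact hS x hx y hy fun h => hne (h ▸ rfl)

theorem HasMinDist.disjoint_map_addLeftEmbedding [∀ i, AddCommGroup (β i)]
    {S : Finset (∀ i, β i)} {d : ℕ} (hS : HasMinDist S d) {c : ∀ i, β i} (hc₀ : c ≠ 0)
    (hc : hammingNorm c < d) : Disjoint S (S.map (addLeftEmbedding c)) := by
  rw [Finset.disjoint_left]
  intro _ hx hx'
  obtain ⟨y, hy, rfl⟩ := Finset.mem_map.mp hx'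
  rw [addLeftEmbedding_apply] at hx
  have hdist : hammingDist y (c + y) = hammingNorm c := by
    rw [hammingDist_eq_hammingNorm, add_comm c, neg_add_cancel_left]
  have hne : y ≠ c + y := fun h => hc₀ (by simpa using h.symm)
  exact absurd (hdist ▸ hS y hy _ hx hne) (not_le.mpr hc)

end Hamming

instance : DecidablePred (· ∈ C10) := fun m =>
  inferInstanceAs (Decidable (∃ s : ZMod 2, (∀ i : Fin 4, ∑ j : Fin 4, m (i, j) = s) ∧
    (∀ j : Fin 4, ∑ i : Fin 4, m (i, j) = s)))

theorem zero_mem_C10 : (0 : Fin 4 × Fin 4 → ZMod 2) ∈ C10 :=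
  ⟨0, by simp, by simp⟩

theorem add_mem_C10 {x y : Fin 4 × Fin 4 → ZMod 2} (hx : x ∈ C10) (hy : y ∈ C10) :
    x + y ∈ C10 := by
  obtain ⟨s, hxr, hxc⟩ := hx
  obtain ⟨s', hyr, hyc⟩ := hy
  exact ⟨s + s', fun i => by simp [Finset.sum_add_distrib, hxr, hyr],
    fun j => by simp [Finset.sum_add_distrib, hxc, hyc]⟩

def toMatrix (n : ℕ) : Fin 4 × Fin 4 → ZMod 2 :=
  fun p => if n.testBit (4 * p.1 + p.2) then 1 else 0

theorem toMatrix_zero : toMatrix 0 = 0 := by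
  funext p
  simp [toMatrix]

theorem toMatrix_xor (a b : ℕ) : toMatrix (a ^^^ b) = toMatrix a + toMatrix b := by
  funext p
  simp only [toMatrix, Nat.testBit_xor, Pi.add_apply]
  cases a.testBit (4 * p.1 + p.2) <;> cases b.testBit (4 * p.1 + p.2) <;> decide

theorem hammingDist_toMatrix (a b : ℕ) :
    hammingDist (toMatrix a) (toMatrix b) = hammingNorm (toMatrix (a ^^^ b)) := by
  simp only [hammingDist, hammingNorm, toMatrix, Nat.testBit_xor]
  congr 1
  refine Finset.filter_congr fun p _ => ?_
  cases a.testBit (4 * p.1 + p.2) <;> cases b.testBit (4 * p.1 + p.2) <;> decide +revert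

def xorSpan : List ℕ → List ℕ
  | [] => [0]
  | g :: gs => xorSpan gs ++ (xorSpan gs).map (g ^^^ ·)

theorem mem_xorSpan_cons {g a : ℕ} {gs : List ℕ} :
    a ∈ xorSpan (g :: gs) ↔ a ∈ xorSpan gs ∨ ∃ b ∈ xorSpan gs, g ^^^ b = a := by
  simp [xorSpan]

theorem xor_mem_xorSpan {gs : List ℕ} {a b : ℕ} (ha : a ∈ xorSpan gs)
    (hb : b ∈ xorSpan gs) :
    a ^^^ b ∈ xorSpan gs := by
  induction gs generalizing a b with
  | nil => simp_all [xorSpan]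
  | cons g gs ih =>
    rw [mem_xorSpan_cons] at ha hb ⊢
    rcases ha with ha | ⟨a, ha, rfl⟩ <;> rcases hb with hb | ⟨b, hb, rfl⟩
    · exact .inl (ih ha hb)
    · exact .inr ⟨a ^^^ b, ih ha hb, by ac_rfl⟩
    · exact .inr ⟨a ^^^ b, ih ha hb, by ac_rfl⟩
    · refine .inl ?_
      rw [show g ^^^ a ^^^ (g ^^^ b) = g ^^^ (g ^^^ (a ^^^ b)) by ac_rfl,
        Nat.xor_xor_cancel_left]
      exact ih ha hb

theorem toMatrix_mem_C10_of_mem_xorSpan {gs : List ℕ} (hgs : ∀ g ∈ gs, toMatrix g ∈ C10) :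
    ∀ a ∈ xorSpan gs, toMatrix a ∈ C10 := by
  induction gs with
  | nil => simp [xorSpan, toMatrix_zero, zero_mem_C10]
  | cons g gs ih =>
    have ih' := ih fun g' hg' => hgs g' (List.mem_cons_of_mem g hg')
    intro a ha
    rcases mem_xorSpan_cons.mp ha with ha | ⟨b, hb, rfl⟩
    · exact ih' a ha
    · rw [toMatrix_xor]
      exact add_mem_C10 (hgs g List.mem_cons_self) (ih' b hb)

/-- The all-ones matrix and the indicators of rows `{0, 1}`, rows `{0, 2}`, columns `{0, 1}`
and columns `{0, 2}`: a basis of the first-order Reed–Muller code `RM(1,4)`. -/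
def reedMullerBasis : List ℕ := [65535, 255, 3855, 13107, 21845]

def reedMuller : List ℕ := xorSpan reedMullerBasis

def cosetLeaders : List ℕ := [869, 1360, 1542, 4680, 5147, 6014]

def cosetCode : List ℕ := cosetLeaders.flatMap fun t => reedMuller.map (t ^^^ ·)

theorem mem_cosetCode {a : ℕ} :
    a ∈ cosetCode ↔ ∃ t ∈ cosetLeaders, ∃ v ∈ reedMuller, t ^^^ v = a := by
  simp [cosetCode]

theorem toMatrix_mem_C10_of_mem_cosetCode {a : ℕ} (ha : a ∈ cosetCode) :
    toMatrix a ∈ C10 := by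
  obtain ⟨t, ht, v, hv, rfl⟩ := mem_cosetCode.mp ha
  have hbasis : ∀ g ∈ reedMullerBasis, toMatrix g ∈ C10 := by decide
  have hleaders : ∀ t ∈ cosetLeaders, toMatrix t ∈ C10 := by decide
  rw [toMatrix_xor]
  exact add_mem_C10 (hleaders t ht) (toMatrix_mem_C10_of_mem_xorSpan hbasis v hv)

set_option maxRecDepth 100000 in
theorem six_le_hammingNorm_cosetLeaders_xor :
    ∀ t ∈ cosetLeaders, ∀ u ∈ cosetLeaders, ∀ v ∈ reedMuller,
      t ^^^ u ^^^ v ≠ 0 → 6 ≤ hammingNorm (toMatrix (t ^^^ u ^^^ v)) := by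
  decide

theorem six_le_hammingNorm_cosetCode_xor {a b : ℕ} (ha : a ∈ cosetCode) (hb : b ∈ cosetCode)
    (hab : a ^^^ b ≠ 0) : 6 ≤ hammingNorm (toMatrix (a ^^^ b)) := by
  obtain ⟨t, ht, v, hv, rfl⟩ := mem_cosetCode.mp ha
  obtain ⟨u, hu, w, hw, rfl⟩ := mem_cosetCode.mp hb
  have hxor : t ^^^ v ^^^ (u ^^^ w) = t ^^^ u ^^^ (v ^^^ w) := by ac_rfl
  rw [hxor] at hab ⊢
  exact six_le_hammingNorm_cosetLeaders_xor t ht u hu _ (xor_mem_xorSpan hv hw) hab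

theorem toMatrix_injOn_cosetCode : Set.InjOn toMatrix {a | a ∈ cosetCode} := by
  intro a ha b hb hab
  by_contra hne
  have hnorm := six_le_hammingNorm_cosetCode_xor ha hb (by rwa [Ne, Nat.xor_eq_zero_iff])
  rw [← hammingDist_toMatrix, hab, hammingDist_self] at hnorm
  omega

set_option maxRecDepth 100000 in
theorem cosetCode_nodup : cosetCode.Nodup := by
  decide

set_option maxRecDepth 100000 in
theorem cosetCode_length : cosetCode.length = 192 := by
  decide

def cosetCodeMatrices : Finset (Fin 4 × Fin 4 → ZMod 2) :=
  (cosetCode.map toMatrix).toFinset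

theorem mem_cosetCodeMatrices {x : Fin 4 × Fin 4 → ZMod 2} :
    x ∈ cosetCodeMatrices ↔ ∃ a ∈ cosetCode, toMatrix a = x := by
  simp [cosetCodeMatrices]

theorem card_cosetCodeMatrices : cosetCodeMatrices.card = 192 := by
  rw [cosetCodeMatrices,
    List.toFinset_card_of_nodup (cosetCode_nodup.map_on toMatrix_injOn_cosetCode),
    List.length_map, cosetCode_length]

theorem cosetCodeMatrices_subset_C10 :
    (↑cosetCodeMatrices : Set (Fin 4 × Fin 4 → ZMod 2)) ⊆ C10 := by
  rintro _ hx
  obtain ⟨a, ha, rfl⟩ := mem_cosetCodeMatrices.mp hx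
  exact toMatrix_mem_C10_of_mem_cosetCode ha

theorem hasMinDist_cosetCodeMatrices : HasMinDist cosetCodeMatrices 6 := by
  rintro _ hx _ hy hne
  obtain ⟨a, ha, rfl⟩ := mem_cosetCodeMatrices.mp hx
  obtain ⟨b, hb, rfl⟩ := mem_cosetCodeMatrices.mp hy
  have hab : a ^^^ b ≠ 0 := by
    rw [Ne, Nat.xor_eq_zero_iff]
    rintro rfl
    exact hne rfl
  rw [hammingDist_toMatrix]
  exact six_le_hammingNorm_cosetCode_xor ha hb hab

theorem coe_map_addLeftEmbedding_subset_C10 {S : Finset (Fin 4 × Fin 4 → ZMod 2)}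
    (hS : (↑S : Set (Fin 4 × Fin 4 → ZMod 2)) ⊆ C10) {c : Fin 4 × Fin 4 → ZMod 2}
    (hc : c ∈ C10) :
    (↑(S.map (addLeftEmbedding c)) : Set (Fin 4 × Fin 4 → ZMod 2)) ⊆ C10 := by
  intro _ hx
  obtain ⟨y, hy, rfl⟩ := Finset.mem_map.mp hx
  exact add_mem_C10 hc (hS hy)

def cornerBlock : Fin 4 × Fin 4 → ZMod 2 :=
  fun p => if p.1 < 2 ∧ p.2 < 2 then 1 else 0

theorem cornerBlock_ne_zero : cornerBlock ≠ 0 := by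
  decide

theorem cornerBlock_mem_C10 : cornerBlock ∈ C10 := by
  decide

theorem hammingNorm_cornerBlock : hammingNorm cornerBlock = 4 := by
  decide

/-- There are two disjoint subsets of `C₁₀`, each of size 192, within each of which
any two distinct elements are at Hamming distance at least 6. -/
theorem exists_two_disjoint_subcodes_C10 :
    ∃ S₁ S₂ : Finset (Fin 4 × Fin 4 → ZMod 2),
      (↑S₁ : Set (Fin 4 × Fin 4 → ZMod 2)) ⊆ C10 ∧
      (↑S₂ : Set (Fin 4 × Fin 4 → ZMod 2)) ⊆ C10 ∧
      Disjoint S₁ S₂ ∧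
      S₁.card = 192 ∧ S₂.card = 192 ∧
      (∀ x ∈ S₁, ∀ y ∈ S₁, x ≠ y → 6 ≤ hammingDist x y) ∧
      (∀ x ∈ S₂, ∀ y ∈ S₂, x ≠ y → 6 ≤ hammingDist x y) := by
  have hblock : hammingNorm cornerBlock < 6 := by
    rw [hammingNorm_cornerBlock]
    norm_num
  exact ⟨cosetCodeMatrices, cosetCodeMatrices.map (addLeftEmbedding cornerBlock),
    cosetCodeMatrices_subset_C10,
    coe_map_addLeftEmbedding_subset_C10 cosetCodeMatrices_subset_C10 cornerBlock_mem_C10,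
    hasMinDist_cosetCodeMatrices.disjoint_map_addLeftEmbedding cornerBlock_ne_zero hblock,
    card_cosetCodeMatrices, by rw [Finset.card_map, card_cosetCodeMatrices],
    hasMinDist_cosetCodeMatrices,
    hasMinDist_cosetCodeMatrices.map_addLeftEmbedding cornerBlock⟩
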